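/- If X ∈ ℂ^{N×m} is a critical point of E₀, then the column space of X is an invariant subspace of H; in particular, the column space of X is spanned by a set of eigenvectors of H. -/

import Mathlib

open Matrix
open scoped ComplexOrder

attribute [local instance] Matrix.frobeniusSeminormedAddCommGroup
  Matrix.frobeniusNormedAddCommGroup Matrix.frobeniusNormedSpace

/-- The OMM functional `E₀(X) = tr[(2I − X*X) X*HX]` (real-valued, since `H` is Hermitian). -/
noncomputable def E0 {N m : ℕ} (H : Matrix (Fin N) (Fin N) ℂ)
    (X : Matrix (Fin N) (Fin m) ℂ) : ℝ :=
  (((2 : ℂ) • (1 : Matrix (Fin m) (Fin m) ℂ) - Xᴴ * X) * (Xᴴ * H * X)).trace.re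

/-!
The real derivative of `E₀` at `X` in direction `V` is `Re tr(V* ∇E₀(X))` with
`∇E₀(X) = 2 (HX(2I − X*X) − X X*HX)`, so at a critical point `HX(2I − X*X) = X (X*HX)`.
If `(2I − X*X)u = 0`, this gives `X X*HXu = 0`, hence `X*HXu = 0` and `(Xu)* H (Xu) = 0`;
definiteness of `H` forces `Xu = 0`, and then `2u = 0`. So `2I − X*X` is invertible and
`HX = X (X*HX)(2I − X*X)⁻¹`: the column space of `X` is `H`-invariant. The restriction of `H`
to an invariant subspace is again Hermitian, so the subspace has a basis of eigenvectors.
-/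

section Calculus

variable {l m n : Type*} [Fintype l] [Fintype m] [Fintype n]
  {E : Type*} [NormedAddCommGroup E] [NormedSpace ℝ E]

theorem Matrix.isBoundedBilinearMap_mul :
    IsBoundedBilinearMap ℝ fun p : Matrix l m ℂ × Matrix m n ℂ => p.1 * p.2 where
  add_left := Matrix.add_mul
  smul_left r A B := Matrix.smul_mul r A B
  add_right := Matrix.mul_add
  smul_right r A B := Matrix.mul_smul A r B
  bound := ⟨1, one_pos, fun A B => by simpa using Matrix.frobenius_norm_mul A B⟩

noncomputable def Matrix.conjTransposeCLM : Matrix m n ℂ →L[ℝ] Matrix n m ℂ :=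
  LinearMap.toContinuousLinearMap
    { toFun := conjTranspose
      map_add' := conjTranspose_add
      map_smul' r A := by ext; simp }

theorem HasFDerivAt.matrix_mul {f : E → Matrix l m ℂ} {g : E → Matrix m n ℂ}
    {f' : E →L[ℝ] Matrix l m ℂ} {g' : E →L[ℝ] Matrix m n ℂ} {x : E}
    (hf : HasFDerivAt f f' x) (hg : HasFDerivAt g g' x) :
    HasFDerivAt (fun y => f y * g y)
      ((Matrix.isBoundedBilinearMap_mul.deriv (f x, g x)).comp (f'.prod g')) x :=
  HasFDerivAt.comp (g := fun p : Matrix l m ℂ × Matrix m n ℂ => p.1 * p.2) x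
    (Matrix.isBoundedBilinearMap_mul.hasFDerivAt (f x, g x)) (hf.prodMk hg)

theorem HasFDerivAt.matrix_conjTranspose {f : E → Matrix m n ℂ} {f' : E →L[ℝ] Matrix m n ℂ}
    {x : E} (hf : HasFDerivAt f f' x) :
    HasFDerivAt (fun y => (f y)ᴴ) (conjTransposeCLM.comp f') x :=
  HasFDerivAt.comp (g := conjTranspose) x conjTransposeCLM.hasFDerivAt hf

end Calculus

theorem fderiv_E0_apply {N m : ℕ} (H : Matrix (Fin N) (Fin N) ℂ)
    (X V : Matrix (Fin N) (Fin m) ℂ) :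
    fderiv ℝ (E0 H) X V = ((((2 : ℂ) • 1 - Xᴴ * X) * (Vᴴ * H * X + Xᴴ * H * V)
      - (Vᴴ * X + Xᴴ * V) * (Xᴴ * H * X)).trace).re := by
  have hX := hasFDerivAt_id (𝕜 := ℝ) X
  have hT := (hX.matrix_conjTranspose.matrix_mul hX).const_sub ((2 : ℂ) • 1)
  have hQ := (hX.matrix_conjTranspose.matrix_mul (hasFDerivAt_const H X)).matrix_mul hX
  let reTrace : Matrix (Fin m) (Fin m) ℂ →L[ℝ] ℝ :=
    Complex.reCLM.comp (traceLinearMap (Fin m) ℝ ℂ).toContinuousLinearMap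
  have hE : HasFDerivAt (E0 H) _ X := reTrace.hasFDerivAt.comp X (hT.matrix_mul hQ)
  rw [hE.fderiv]
  -- `simp` cannot evaluate this derivative: the types of the continuous linear maps involved mix
  -- the Frobenius and the product topology on matrices, which agree only up to unfolding.
  change (((2 : ℂ) • 1 - Xᴴ * X)
      * (Xᴴ * H * V + (Xᴴ * (0 : Matrix (Fin N) (Fin N) ℂ) + Vᴴ * H) * X)
    + -(Xᴴ * V + Vᴴ * X) * (Xᴴ * H * X)).trace.re = _
  rw [Matrix.mul_zero, zero_add, add_comm (Xᴴ * V), add_comm (Xᴴ * H * V), neg_mul,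
    ← sub_eq_add_neg]

theorem Matrix.IsHermitian.re_trace_mul_add_conjTranspose {n : Type*} [Fintype n]
    {T : Matrix n n ℂ} (hT : T.IsHermitian) (A : Matrix n n ℂ) :
    (T * (A + Aᴴ)).trace.re = 2 * (A * T).trace.re := by
  have h : (T * Aᴴ).trace.re = (A * T).trace.re := by
    rw [← hT.eq, ← conjTranspose_mul, trace_conjTranspose, Complex.star_def, Complex.conj_re,
      hT.eq]
  rw [Matrix.mul_add, trace_add, Complex.add_re, h, trace_mul_comm]
  ring

/-- The gradient of `E₀` for the real inner product `⟨V, G⟩ = Re tr(V* G)`. -/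
noncomputable def gradE0 {N m : ℕ} (H : Matrix (Fin N) (Fin N) ℂ)
    (X : Matrix (Fin N) (Fin m) ℂ) : Matrix (Fin N) (Fin m) ℂ :=
  (2 : ℂ) • (H * X * ((2 : ℂ) • 1 - Xᴴ * X) - X * (Xᴴ * H * X))

theorem fderiv_E0_apply_eq_re_trace_gradE0 {N m : ℕ} {H : Matrix (Fin N) (Fin N) ℂ}
    (hH : H.IsHermitian) (X V : Matrix (Fin N) (Fin m) ℂ) :
    fderiv ℝ (E0 H) X V = (Vᴴ * gradE0 H X).trace.re := by
  have hT : ((2 : ℂ) • (1 : Matrix (Fin m) (Fin m) ℂ) - Xᴴ * X).IsHermitian := by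
    simp [IsHermitian, conjTranspose_sub, conjTranspose_smul]
  have hQ : (Xᴴ * H * X).IsHermitian := isHermitian_conjTranspose_mul_mul X hH
  have hHX : (Vᴴ * H * X)ᴴ = Xᴴ * H * V := by
    simp [conjTranspose_mul, hH.eq, Matrix.mul_assoc]
  have hXX : (Vᴴ * X)ᴴ = Xᴴ * V := by simp [conjTranspose_mul]
  rw [fderiv_E0_apply, ← hHX, ← hXX, trace_sub, Complex.sub_re,
    hT.re_trace_mul_add_conjTranspose, trace_mul_comm (_ + _), hQ.re_trace_mul_add_conjTranspose,
    gradE0]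
  simp only [Matrix.mul_smul, Matrix.mul_sub, trace_smul, trace_sub, Matrix.mul_assoc]
  simp only [smul_eq_mul, Complex.sub_re, Complex.mul_re, Complex.re_ofNat, Complex.im_ofNat]
  ring

theorem Matrix.eq_zero_of_re_trace_conjTranspose_mul_self_eq_zero {m n : Type*} [Fintype m]
    [Fintype n] {A : Matrix m n ℂ} (h : (Aᴴ * A).trace.re = 0) : A = 0 := by
  have him := (Complex.nonneg_iff.mp (posSemidef_conjTranspose_mul_self A).trace_nonneg).2
  exact trace_conjTranspose_mul_self_eq_zero_iff.mp (Complex.ext h him.symm)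

theorem gradE0_eq_zero_of_fderiv_eq_zero {N m : ℕ} {H : Matrix (Fin N) (Fin N) ℂ}
    (hH : H.IsHermitian) {X : Matrix (Fin N) (Fin m) ℂ} (hcrit : fderiv ℝ (E0 H) X = 0) :
    gradE0 H X = 0 := by
  have h := fderiv_E0_apply_eq_re_trace_gradE0 hH X (gradE0 H X)
  rw [hcrit] at h
  exact eq_zero_of_re_trace_conjTranspose_mul_self_eq_zero h.symm

theorem mul_two_sub_eq_of_gradE0_eq_zero {N m : ℕ} {H : Matrix (Fin N) (Fin N) ℂ}
    {X : Matrix (Fin N) (Fin m) ℂ} (hgrad : gradE0 H X = 0) :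
    H * X * ((2 : ℂ) • 1 - Xᴴ * X) = X * (Xᴴ * H * X) := by
  rw [gradE0, smul_eq_zero, sub_eq_zero] at hgrad
  exact hgrad.resolve_left two_ne_zero

theorem isUnit_det_two_sub_of_gradE0_eq_zero {N m : ℕ} {H : Matrix (Fin N) (Fin N) ℂ}
    (hneg : (-H).PosDef) {X : Matrix (Fin N) (Fin m) ℂ} (hgrad : gradE0 H X = 0) :
    IsUnit ((2 : ℂ) • 1 - Xᴴ * X).det := by
  refine isUnit_iff_ne_zero.mpr fun hdet => ?_
  obtain ⟨u, hu0, hu⟩ := exists_mulVec_eq_zero_iff.mpr hdet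
  have hXXHXu : (X * Xᴴ) *ᵥ (H *ᵥ (X *ᵥ u)) = 0 := by
    have := congrArg (· *ᵥ u) (mul_two_sub_eq_of_gradE0_eq_zero hgrad)
    simp only [← mulVec_mulVec, hu, mulVec_zero] at this
    simpa only [mulVec_mulVec, Matrix.mul_assoc] using this.symm
  have hXHXu : Xᴴ *ᵥ (H *ᵥ (X *ᵥ u)) = 0 :=
    (self_mul_conjTranspose_mulVec_eq_zero X _).mp hXXHXu
  have hXu : X *ᵥ u = 0 := by
    by_contra hXu
    have hpos := hneg.dotProduct_mulVec_pos hXu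
    rw [neg_mulVec, dotProduct_neg, star_mulVec, ← dotProduct_mulVec, hXHXu] at hpos
    simp at hpos
  have h2u : ((2 : ℂ) • 1 - Xᴴ * X) *ᵥ u = (2 : ℂ) • u := by
    rw [sub_mulVec, ← mulVec_mulVec, hXu, mulVec_zero, sub_zero, smul_mulVec, one_mulVec]
  rw [hu, eq_comm, smul_eq_zero] at h2u
  exact hu0 (h2u.resolve_left two_ne_zero)

theorem Matrix.mulVec_mem_range_mulVecLin_of_mul_eq {R n m : Type*} [CommSemiring R] [Fintype n]
    [Fintype m] {H : Matrix n n R} {X : Matrix n m R} {B : Matrix m m R} (h : H * X = X * B)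
    {v : n → R} (hv : v ∈ LinearMap.range X.mulVecLin) :
    H *ᵥ v ∈ LinearMap.range X.mulVecLin := by
  obtain ⟨a, rfl⟩ := hv
  exact ⟨B *ᵥ a, by simp only [mulVecLin_apply, mulVec_mulVec, h]⟩

theorem Matrix.IsHermitian.exists_eigenvectors_span_eq_of_invariant {𝕜 n : Type*} [RCLike 𝕜]
    [Fintype n] [DecidableEq n] {H : Matrix n n 𝕜} (hH : H.IsHermitian) {W : Submodule 𝕜 (n → 𝕜)}
    (hW : ∀ v ∈ W, H *ᵥ v ∈ W) :
    ∃ (r : ℕ) (ξ : Fin r → (n → 𝕜)),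
      (∀ i, ξ i ≠ 0 ∧ ∃ c : 𝕜, H *ᵥ ξ i = c • ξ i) ∧ W = Submodule.span 𝕜 (Set.range ξ) := by
  let e : EuclideanSpace 𝕜 n ≃ₗ[𝕜] (n → 𝕜) := WithLp.linearEquiv 2 𝕜 (n → 𝕜)
  let W' : Submodule 𝕜 (EuclideanSpace 𝕜 n) := W.comap e.toLinearMap
  have hW' : ∀ v ∈ W', toEuclideanLin H v ∈ W' := fun v hv => hW (e v) hv
  have hsym := (isSymmetric_toEuclideanLin_iff.mpr hH).restrict_invariant hW'
  let b := hsym.eigenvectorBasis (n := Module.finrank 𝕜 W') rfl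
  refine ⟨Module.finrank 𝕜 W', fun i => e (b i), fun i => ⟨?_, ?_⟩, ?_⟩
  · simpa using (hsym.hasEigenvector_eigenvectorBasis rfl i).2
  · refine ⟨hsym.eigenvalues rfl i, ?_⟩
    have h := congrArg (fun w : W' => e w) (hsym.apply_eigenvectorBasis rfl i)
    simp only [LinearMap.restrict_apply] at h
    change e (toEuclideanLin H (b i)) = _
    rw [h, Submodule.coe_smul, map_smul]
  · have hb : Submodule.span 𝕜 (Set.range b) = ⊤ := by simpa using b.toBasis.span_eq
    calc W = (⊤ : Submodule 𝕜 W').map (e.toLinearMap ∘ₗ W'.subtype) := by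
          rw [Submodule.map_top, LinearMap.range_comp, Submodule.range_subtype,
            Submodule.map_comap_eq_of_surjective e.surjective]
      _ = _ := by rw [← hb, Submodule.map_span, ← Set.range_comp]; rfl

theorem stmt7_general {N m : ℕ}
    (H : Matrix (Fin N) (Fin N) ℂ) (hH : H.IsHermitian) (hneg : (-H).PosDef)
    (X : Matrix (Fin N) (Fin m) ℂ) (hcrit : fderiv ℝ (E0 H) X = 0) :
    (∀ v ∈ LinearMap.range X.mulVecLin,
      H.mulVec v ∈ LinearMap.range X.mulVecLin) ∧
    ∃ (r : ℕ) (ξ : Fin r → (Fin N → ℂ)),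
      (∀ i, ξ i ≠ 0 ∧ ∃ c : ℂ, H.mulVec (ξ i) = c • ξ i) ∧
      LinearMap.range X.mulVecLin = Submodule.span ℂ (Set.range ξ) := by
  have hgrad := gradE0_eq_zero_of_fderiv_eq_zero hH hcrit
  have hHX : H * X = X * (Xᴴ * H * X * ((2 : ℂ) • 1 - Xᴴ * X)⁻¹) := by
    rw [← Matrix.mul_assoc, ← mul_two_sub_eq_of_gradE0_eq_zero hgrad, Matrix.mul_assoc,
      mul_nonsing_inv _ (isUnit_det_two_sub_of_gradE0_eq_zero hneg hgrad), Matrix.mul_one]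
  have hinv : ∀ v ∈ LinearMap.range X.mulVecLin, H *ᵥ v ∈ LinearMap.range X.mulVecLin :=
    fun _ => mulVec_mem_range_mulVecLin_of_mul_eq hHX
  exact ⟨hinv, hH.exists_eigenvectors_span_eq_of_invariant hinv⟩

/-- At a critical point `X` of `E₀`, the column space of `X` is an invariant subspace
of `H`; in particular it is spanned by eigenvectors of `H`. -/
theorem stmt7 {N m : ℕ} (hN : 0 < N) (hm : 0 < m) (hmN : m ≤ N)
    (H : Matrix (Fin N) (Fin N) ℂ) (hH : H.IsHermitian) (hneg : (-H).PosDef)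
    (X : Matrix (Fin N) (Fin m) ℂ) (hcrit : fderiv ℝ (E0 H) X = 0) :
    (∀ v ∈ LinearMap.range X.mulVecLin,
      H.mulVec v ∈ LinearMap.range X.mulVecLin) ∧
    ∃ (r : ℕ) (ξ : Fin r → (Fin N → ℂ)),
      (∀ i, ξ i ≠ 0 ∧ ∃ c : ℂ, H.mulVec (ξ i) = c • ξ i) ∧
      LinearMap.range X.mulVecLin = Submodule.span ℂ (Set.range ξ) :=
  stmt7_general H hH hneg X hcrit
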